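/- arXiv:1802.06212 — 3 statements merged into one kernel-verified Lean document; each statement's English description precedes it below -/
import Mathlib

section
/- If f(S₀) ≥ (1 - e^{-s₀/W} - 2ε)v and f(S) ≥ f(S₀) + α|T| where S = S₀ ∪ T (disjoint), α = ((1-ε)v - f(S₀))/W, |S₀| = s₀, |T| = t, and 0 ≤ t ≤ W, then f(S) ≥ (1 - e^{-(s₀+t)/W} - 2ε)v. -/
/-- Recurrence step in the analysis of `Simple` (cardinality case):
if `f(S₀) ≥ (1 - e^{-s₀/W} - 2ε)v` and `f(S) ≥ f(S₀) + α·t` with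
`α = ((1-ε)v - f(S₀))/W`, `0 ≤ t ≤ W`, then
`f(S) ≥ (1 - e^{-(s₀+t)/W} - 2ε)v`. -/
theorem simple_recurrence (v W ε s₀ t fS₀ fS : ℝ)
    (hv : 0 < v) (hW : 0 < W) (hε : 0 ≤ ε) (hs₀ : 0 ≤ s₀)
    (ht0 : 0 ≤ t) (htW : t ≤ W)
    (h1 : fS₀ ≥ (1 - Real.exp (-s₀ / W) - 2 * ε) * v)
    (h2 : fS ≥ fS₀ + ((1 - ε) * v - fS₀) / W * t) :
    fS ≥ (1 - Real.exp (-(s₀ + t) / W) - 2 * ε) * v := by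
  have hsplit : Real.exp (-(s₀ + t) / W) = Real.exp (-s₀ / W) * Real.exp (-(t / W)) := by
    rw [← Real.exp_add]; ring_nf
  have hexp : 1 - t / W ≤ Real.exp (-(t / W)) := by
    have := Real.add_one_le_exp (-(t / W)); linarith
  have hA : 0 < Real.exp (-s₀ / W) := Real.exp_pos _
  have hA1 : Real.exp (-s₀ / W) ≤ 1 := by
    apply Real.exp_le_one_iff.mpr
    apply div_nonpos_of_nonpos_of_nonneg <;> linarith
  have hθ : t / W ≤ 1 := by
    rw [div_le_one hW]; exact htW
  have hθ0 : 0 ≤ t / W := div_nonneg ht0 hW.le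
  rw [hsplit]
  have h2' : fS ≥ fS₀ * (1 - t / W) + (1 - ε) * v * (t / W) := by
    have : ((1 - ε) * v - fS₀) / W * t = ((1 - ε) * v - fS₀) * (t / W) := by ring
    nlinarith [h2]
  nlinarith [mul_le_mul_of_nonneg_left hexp hA.le, mul_nonneg (mul_nonneg hε hv.le) hθ0,
    mul_le_mul_of_nonneg_right h1 (by linarith : (0:ℝ) ≤ 1 - t / W),
    mul_pos hA hv]
end

section
/- For all real a, b with 0 ≤ b ≤ a, 0.315 ≤ b and 0.63 ≤ a ≤ 1, the function h(a,b) = 1 - (1-b)·e^{b-a} satisfies h(a,b) ≥ 0.50. -/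
open Real

lemma exp_315_ge : (1.37 : ℝ) ≤ Real.exp 0.315 := by
  have h := Real.sum_le_exp_of_nonneg (x := 0.315) (by norm_num) 5
  refine le_trans ?_ h
  simp [Finset.sum_range_succ]
  norm_num [Nat.factorial]

lemma anti_aux : AntitoneOn (fun b : ℝ => (1 - b) * Real.exp b) (Set.Icc 0.315 1) := by
  apply antitoneOn_of_deriv_nonpos (convex_Icc _ _)
  · fun_prop
  · apply Differentiable.differentiableOn; fun_prop
  · intro x hx
    rw [interior_Icc] at hx
    have hd : HasDerivAt (fun b : ℝ => (1 - b) * Real.exp b)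
        ((-1) * Real.exp x + (1 - x) * Real.exp x) x :=
      ((hasDerivAt_id x).const_sub 1).mul (Real.hasDerivAt_exp x)
    rw [hd.deriv]
    have := Real.exp_pos x
    nlinarith [hx.1]

theorem h_bound_case2 (a b : ℝ) (hb0 : 0 ≤ b) (hba : b ≤ a)
    (hb : 0.315 ≤ b) (ha1 : 0.63 ≤ a) (ha2 : a ≤ 1) :
    1 - (1 - b) * Real.exp (b - a) ≥ 0.50 := by
  have hb1 : b ≤ 1 := hba.trans ha2
  have key : (1 - b) * Real.exp b ≤ (1 - 0.315) * Real.exp 0.315 :=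
    anti_aux (Set.mem_Icc.2 ⟨le_refl _, by norm_num⟩) (Set.mem_Icc.2 ⟨hb, hb1⟩) hb
  have hea : Real.exp (-a) ≤ Real.exp (-0.63) := Real.exp_le_exp.2 (by linarith)
  have h1 : (1 - b) * Real.exp (b - a) ≤ 0.685 * Real.exp (-0.315) := by
    have : (1 - b) * Real.exp (b - a) = ((1 - b) * Real.exp b) * Real.exp (-a) := by
      rw [mul_assoc, ← Real.exp_add]; ring_nf
    rw [this]
    calc ((1 - b) * Real.exp b) * Real.exp (-a)
        ≤ ((1 - 0.315) * Real.exp 0.315) * Real.exp (-0.63) := by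
          apply mul_le_mul key hea (Real.exp_pos _).le
          positivity
      _ = 0.685 * Real.exp (-0.315) := by
          rw [mul_assoc, ← Real.exp_add]; norm_num
  have h2 : (0.685 : ℝ) * Real.exp (-0.315) ≤ 0.5 := by
    rw [Real.exp_neg, inv_eq_one_div, ← mul_div_assoc, div_le_iff₀ (Real.exp_pos _)]
    nlinarith [exp_315_ge]
  linarith
end

section
/- For all real a, b with 0.22 ≤ b, 2/3 ≤ a ≤ 1, and b ≤ a, the function h(a,b) = 1 - (1-b)·e^{b-a} satisfies h(a,b) ≥ 0.50. -/
theorem h_bound_case3 (a b : ℝ) (hb : 0.22 ≤ b) (ha1 : 2 / 3 ≤ a)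
    (ha2 : a ≤ 1) (hba : b ≤ a) :
    1 - (1 - b) * Real.exp (b - a) ≥ 0.50 := by
  have hx : (1.56 : ℝ) ≤ Real.exp (67 / 150) := by
    have h := Real.sum_le_exp_of_nonneg (x := 67 / 150) (by norm_num) 4
    norm_num [Finset.sum_range_succ, Nat.factorial] at h
    linarith
  -- key1 : (1 - b) * exp b ≤ 0.78 * exp 0.22
  have ht : 0 ≤ b - 0.22 := by linarith
  have h1 : Real.exp (b - 0.22) - 1 ≤ (b - 0.22) * Real.exp (b - 0.22) := by
    have := Real.add_one_le_exp (-(b - 0.22))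
    have hp := Real.exp_pos (b - 0.22)
    have hm : Real.exp (-(b - 0.22)) * Real.exp (b - 0.22) = 1 := by
      rw [← Real.exp_add]; simp
    nlinarith
  have hone : (1 : ℝ) ≤ Real.exp (b - 0.22) := Real.one_le_exp ht
  have key1 : (1 - b) * Real.exp b ≤ 0.78 * Real.exp 0.22 := by
    have hsplit : Real.exp b = Real.exp 0.22 * Real.exp (b - 0.22) := by
      rw [← Real.exp_add]; ring_nf
    rw [hsplit]
    have hp22 := Real.exp_pos (0.22 : ℝ)
    nlinarith [Real.exp_pos (b - 0.22)]
  -- now bound exp (b - a)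
  have hsplit2 : Real.exp (b - a) = Real.exp b * Real.exp (-a) := by
    rw [← Real.exp_add]; ring_nf
  have hnb : 0 ≤ 1 - b := by linarith
  have hea : Real.exp (-a) ≤ Real.exp (-(2/3)) := Real.exp_le_exp.2 (by linarith)
  have key2 : (1 - b) * Real.exp (b - a) ≤ 0.78 * Real.exp 0.22 * Real.exp (-(2/3)) := by
    rw [hsplit2, ← mul_assoc]
    have h3 : (1 - b) * Real.exp b * Real.exp (-a)
        ≤ (1 - b) * Real.exp b * Real.exp (-(2/3)) := by
      apply mul_le_mul_of_nonneg_left hea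
      positivity
    exact h3.trans (mul_le_mul_of_nonneg_right key1 (Real.exp_pos _).le)
  have hfin : (0.78 : ℝ) * Real.exp 0.22 * Real.exp (-(2/3)) ≤ 0.5 := by
    have heq : Real.exp (0.22 : ℝ) * Real.exp (-(2/3)) = Real.exp (-(67/150)) := by
      rw [← Real.exp_add]; norm_num
    rw [mul_assoc, heq, Real.exp_neg]
    have hpos : (0 : ℝ) < Real.exp (67/150) := Real.exp_pos _
    rw [inv_eq_one_div, mul_one_div, div_le_iff₀ hpos]
    nlinarith
  linarith [key2.trans hfin]
end
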